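/- For every dimension d ≥ 1, with k = 3^d − 3, the sequence β_k(T^(d)[n])/n^d converges to (3^d − 1)/(3^d + 1) as n → ∞; that is, the limiting density τ_{3^d−3}^(d) for d-dimensional toroidal kings graphs equals (3^d − 1)/(3^d + 1). In particular, τ_6^(2) = 4/5 and τ_24^(3) = 13/14. -/

import Mathlib

open Filter Topology

/-- The `d`-dimensional kings graph on `Fin (n 0) × ⋯ × Fin (n (d-1))`:
distinct vertices are adjacent iff their coordinates differ by at most 1. -/
def kingsGraph (d : ℕ) (n : Fin d → ℕ) :
    SimpleGraph (∀ i : Fin d, Fin (n i)) where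
  Adj u v := u ≠ v ∧ ∀ i, |((v i : ℤ)) - (u i : ℤ)| ≤ 1
  symm := by
    constructor
    rintro u v ⟨h1, h2⟩
    exact ⟨h1.symm, fun i => by rw [abs_sub_comm]; exact h2 i⟩
  loopless := by constructor; intro v h; exact h.1 rfl

/-- The `d`-dimensional toroidal kings graph on `ZMod (n 0) × ⋯ × ZMod (n (d-1))`:
distinct vertices are adjacent iff each coordinate difference is `-1`, `0` or `1`. -/
def torusGraph (d : ℕ) (n : Fin d → ℕ) :
    SimpleGraph (∀ i : Fin d, ZMod (n i)) where
  Adj u v := u ≠ v ∧ ∀ i, v i - u i = -1 ∨ v i - u i = 0 ∨ v i - u i = 1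
  symm := by
    constructor
    rintro u v ⟨h1, h2⟩
    refine ⟨h1.symm, fun i => ?_⟩
    rcases h2 i with h | h | h
    · right; right; rw [show u i - v i = -(v i - u i) by ring, h]; norm_num
    · right; left; rw [show u i - v i = -(v i - u i) by ring, h]; norm_num
    · left; rw [show u i - v i = -(v i - u i) by ring, h]
  loopless := by constructor; intro v h; exact h.1 rfl

/-- A set `S` of vertices is `k`-dependent if every vertex of `S`
has at most `k` neighbors in `S`. -/
def IsKDependent {V : Type*} (G : SimpleGraph V) (k : ℕ) (S : Set V) : Prop :=
  ∀ v ∈ S, (S ∩ G.neighborSet v).ncard ≤ k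

/-- `betaK G k` is the maximum cardinality of a `k`-dependent set in `G`. -/
noncomputable def betaK {V : Type*} (G : SimpleGraph V) (k : ℕ) : ℕ :=
  sSup {m | ∃ S : Set V, IsKDependent G k S ∧ S.ncard = m}

/-- A set `S` of vertices is half-dependent if every vertex `v ∈ S`
has at most `|N(v)|/2` neighbors in `S`. -/
def IsHalfDependent {V : Type*} (G : SimpleGraph V) (S : Set V) : Prop :=
  ∀ v ∈ S, 2 * (S ∩ G.neighborSet v).ncard ≤ (G.neighborSet v).ncard

/-- `halfNum G` is the maximum cardinality of a half-dependent set in `G`. -/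
noncomputable def halfNum {V : Type*} (G : SimpleGraph V) : ℕ :=
  sSup {m | ∃ S : Set V, IsHalfDependent G S ∧ S.ncard = m}

/-- A graph is vertex-transitive if any vertex can be mapped to any other
by a graph automorphism. -/
def IsVertexTransitive {V : Type*} (G : SimpleGraph V) : Prop :=
  ∀ u v : V, ∃ f : G ≃g G, f u = v

/-!
Upper bound: the torus is `(3^d - 1)`-regular, so each vertex of a `(3^d - 3)`-dependent set `S`
has at least two neighbours outside `S`, while each vertex outside `S` has at most `3^d - 1`
neighbours in `S`; double counting gives `(3^d + 1) |S| ≤ (3^d - 1) n^d`.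

Lower bound: with `m = (3^d + 1) / 2`, give the vertex `v` the weight `∑ 3^i v_i`. Away from the
wrap-around, the `3^d = 2m - 1` vertices of the closed neighbourhood of `v` have the consecutive
weights `w(v) - (m - 1), …, w(v) + (m - 1)` (balanced ternary), so if `m ∤ w(v)` exactly two of
them have weight divisible by `m`. Hence the vertices with `m ∤ w(v)` and no coordinate `0` or
`n - 1` form a `(3^d - 3)`-dependent set of density `1 - 1/m + O(1/n)`.
-/

open Finset

section KDependent

variable {V : Type*} (G : SimpleGraph V) {k : ℕ}

lemma bddAbove_kDependent_ncard [Finite V] :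
    BddAbove {m | ∃ S : Set V, IsKDependent G k S ∧ S.ncard = m} :=
  ⟨Nat.card V, by rintro _ ⟨S, -, rfl⟩; exact S.ncard_le_card⟩

variable {G}

lemma IsKDependent.ncard_le_betaK [Finite V] {S : Set V} (hS : IsKDependent G k S) :
    S.ncard ≤ betaK G k :=
  le_csSup (bddAbove_kDependent_ncard G) ⟨S, hS, rfl⟩

variable (G k) in
lemma exists_isKDependent_ncard_eq_betaK [Finite V] :
    ∃ S : Set V, IsKDependent G k S ∧ S.ncard = betaK G k :=
  Nat.sSup_mem (s := {m | ∃ S : Set V, IsKDependent G k S ∧ S.ncard = m})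
    ⟨0, ∅, fun _ h => h.elim, Set.ncard_empty V⟩ (bddAbove_kDependent_ncard G)

lemma isKDependent_coe_iff [DecidableRel G.Adj] {S : Finset V} :
    IsKDependent G k (S : Set V) ↔ ∀ v ∈ S, #{u ∈ S | G.Adj v u} ≤ k := by
  refine forall₂_congr fun v _ => ?_
  rw [← Set.ncard_coe_finset, coe_filter]
  rfl

lemma IsKDependent.card_mul_le [Fintype V] [DecidableRel G.Adj] {r : ℕ}
    (hG : G.IsRegularOfDegree r) (hk : k ≤ r) {S : Finset V} (hS : IsKDependent G k (S : Set V)) :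
    #S * (2 * r - k) ≤ Fintype.card V * r := by
  classical
  rw [isKDependent_coe_iff] at hS
  have hout : #S * (r - k) ≤ #Sᶜ * r := by
    refine card_mul_le_card_mul G.Adj (fun v hv => ?_) (fun u _ => ?_)
    · have hsplit := card_filter_add_card_filter_not (s := G.neighborFinset v) (· ∈ S)
      rw [SimpleGraph.card_neighborFinset_eq_degree, hG v] at hsplit
      have hin : {u ∈ G.neighborFinset v | u ∈ S} = {u ∈ S | G.Adj v u} := by
        ext; simp [and_comm]
      have hnotin : {u ∈ G.neighborFinset v | u ∉ S} = Sᶜ.bipartiteAbove G.Adj v := by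
        ext; simp [bipartiteAbove, and_comm]
      rw [hin, hnotin] at hsplit
      have := hS v hv
      omega
    · calc #(S.bipartiteBelow G.Adj u) ≤ #(G.neighborFinset u) :=
            card_le_card fun v hv => by
              simpa [bipartiteBelow, G.adj_comm] using (mem_filter.1 hv).2
        _ = r := by rw [SimpleGraph.card_neighborFinset_eq_degree, hG u]
  have hcompl := card_compl_add_card S
  calc #S * (2 * r - k) = #S * (r - k) + #S * r := by rw [← mul_add]; congr 1; omega
    _ ≤ #Sᶜ * r + #S * r := by gcongr
    _ = Fintype.card V * r := by rw [← add_mul, hcompl]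

lemma betaK_mul_le_of_isRegularOfDegree [Fintype V] [DecidableRel G.Adj] {r : ℕ}
    (hG : G.IsRegularOfDegree r) (hk : k ≤ r) :
    betaK G k * (2 * r - k) ≤ Fintype.card V * r := by
  obtain ⟨S, hS, hcard⟩ := exists_isKDependent_ncard_eq_betaK G k
  lift S to Finset V using S.toFinite
  rw [← hcard, Set.ncard_coe_finset]
  exact hS.card_mul_le hG hk

lemma SimpleGraph.card_filter_adj_le_degree_sub_two [Fintype V] [DecidableRel G.Adj]
    {S : Finset V} {v u₁ u₂ : V} (h₁ : G.Adj v u₁) (h₂ : G.Adj v u₂) (hne : u₁ ≠ u₂)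
    (hu₁ : u₁ ∉ S) (hu₂ : u₂ ∉ S) : #{u ∈ S | G.Adj v u} ≤ G.degree v - 2 := by
  classical
  have hsub : {u ∈ S | G.Adj v u} ⊆ G.neighborFinset v \ {u₁, u₂} := fun u hu => by
    simp only [mem_filter] at hu
    simp only [Finset.mem_sdiff, SimpleGraph.mem_neighborFinset, mem_insert, mem_singleton]
    exact ⟨hu.2, by rintro (rfl | rfl); exacts [hu₁ hu.1, hu₂ hu.1]⟩
  have hpair : {u₁, u₂} ⊆ G.neighborFinset v := by
    simp [insert_subset_iff, h₁, h₂]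
  calc #{u ∈ S | G.Adj v u} ≤ #(G.neighborFinset v \ {u₁, u₂}) := card_le_card hsub
    _ = G.degree v - 2 := by
      rw [card_sdiff_of_subset hpair, card_pair hne, SimpleGraph.card_neighborFinset_eq_degree]

end KDependent

lemma exists_balancedTernary_digits {d : ℕ} {t : ℤ} (ht : 2 * |t| < 3 ^ d) :
    ∃ ε : Fin d → ℤ, (∀ i, |ε i| ≤ 1) ∧ ∑ i : Fin d, 3 ^ (i : ℕ) * ε i = t := by
  induction d generalizing t with
  | zero =>
    have : |t| = 0 := by have := abs_nonneg t; rw [pow_zero] at ht; omega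
    exact ⟨Fin.elim0, fun i => i.elim0, by simp_all⟩
  | succ d ih =>
    obtain ⟨j, hj⟩ : Odd ((3 : ℤ) ^ d) := Odd.pow (by decide)
    rw [pow_succ, hj] at ht
    -- `t = 3 q + r` with `q = (t + 1) / 3` and `r ∈ {-1, 0, 1}`; as `3 ^ d` is odd,
    -- `2 |q| < 3 ^ d`.
    have hq : 2 * |(t + 1) / 3| < 3 ^ d := by
      rw [hj]
      rcases abs_cases t with ⟨h, _⟩ | ⟨h, _⟩ <;>
        rcases abs_cases ((t + 1) / 3) with ⟨h', _⟩ | ⟨h', _⟩ <;>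
        rw [h] at ht <;> rw [h'] <;> omega
    obtain ⟨ε, hε, hsum⟩ := ih hq
    refine ⟨Fin.cons (t - 3 * ((t + 1) / 3)) ε, fun i => ?_, ?_⟩
    · refine Fin.cases ?_ (fun i => ?_) i
      · simp only [Fin.cons_zero, abs_le]; omega
      · simpa using hε i
    · simp only [Fin.sum_univ_succ, Fin.cons_zero, Fin.cons_succ, Fin.val_zero, Fin.val_succ,
        pow_zero, pow_succ', mul_assoc, ← mul_sum, hsum]
      ring

namespace torusGraph

variable {d n : ℕ}

def closedBox (v : Fin d → ZMod n) : Finset (Fin d → ZMod n) :=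
  Fintype.piFinset fun i => {v i - 1, v i, v i + 1}

lemma mem_closedBox {u v : Fin d → ZMod n} :
    u ∈ closedBox v ↔ ∀ i, u i - v i = -1 ∨ u i - v i = 0 ∨ u i - v i = 1 := by
  simp only [closedBox, Fintype.mem_piFinset, mem_insert, mem_singleton]
  refine forall_congr' fun i => ?_
  grind

lemma self_mem_closedBox (v : Fin d → ZMod n) : v ∈ closedBox v := by
  simp [closedBox]

lemma adj_iff {u v : Fin d → ZMod n} :
    (torusGraph d fun _ => n).Adj v u ↔ v ≠ u ∧ u ∈ closedBox v := by
  rw [mem_closedBox]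
  rfl

instance : DecidableRel (torusGraph d fun _ => n).Adj :=
  fun _ _ => decidable_of_iff _ adj_iff.symm

lemma card_closedBox (hn : 3 ≤ n) (v : Fin d → ZMod n) : #(closedBox v) = 3 ^ d := by
  have h1 : (1 : ZMod n) ≠ 0 := by
    rw [← Nat.cast_one, Ne, ZMod.natCast_eq_zero_iff]
    exact Nat.not_dvd_of_pos_of_lt one_pos (by omega)
  have h2 : (2 : ZMod n) ≠ 0 := by
    rw [← Nat.cast_ofNat, Ne, ZMod.natCast_eq_zero_iff]
    exact Nat.not_dvd_of_pos_of_lt two_pos (by omega)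
  have hthree (x : ZMod n) : #{x - 1, x, x + 1} = 3 := by
    rw [card_insert_of_notMem, card_pair]
    · exact fun h => h1 (by linear_combination -h)
    · simp only [mem_insert, mem_singleton, not_or]
      exact ⟨fun h => h1 (by linear_combination -h), fun h => h2 (by linear_combination -h)⟩
  simp [closedBox, Fintype.card_piFinset, hthree]

lemma neighborFinset_eq [NeZero n] (v : Fin d → ZMod n) :
    (torusGraph d fun _ => n).neighborFinset v = (closedBox v).erase v := by
  ext u
  rw [SimpleGraph.mem_neighborFinset, adj_iff, mem_erase, ne_comm]

lemma isRegularOfDegree [NeZero n] (hn : 3 ≤ n) :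
    (torusGraph d fun _ => n).IsRegularOfDegree (3 ^ d - 1) := fun v => by
  rw [← SimpleGraph.card_neighborFinset_eq_degree, neighborFinset_eq,
    card_erase_of_mem (self_mem_closedBox v), card_closedBox hn]

lemma betaK_mul_le [NeZero n] (hd : 1 ≤ d) (hn : 3 ≤ n) :
    betaK (torusGraph d fun _ => n) (3 ^ d - 3) * (3 ^ d + 1) ≤ n ^ d * (3 ^ d - 1) := by
  have h3 : 3 ≤ 3 ^ d := Nat.le_self_pow (by omega) 3
  have := betaK_mul_le_of_isRegularOfDegree (isRegularOfDegree (d := d) hn) (k := 3 ^ d - 3)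
    (by omega)
  rwa [Fintype.card_fun, ZMod.card, Fintype.card_fin,
    show 2 * (3 ^ d - 1) - (3 ^ d - 3) = 3 ^ d + 1 by omega] at this

def ternaryWeight (v : Fin d → ZMod n) : ℕ := ∑ i : Fin d, 3 ^ (i : ℕ) * (v i).val

/-- A step by `±1` from one of these vertices never wraps around the torus. -/
def interiorVertices (d n : ℕ) [NeZero n] : Finset (Fin d → ZMod n) :=
  Fintype.piFinset fun _ => {x | x.val ∈ Icc 1 (n - 2)}

lemma val_add_intCast_of_mem_Icc [NeZero n] {x : ZMod n} (hx : x.val ∈ Icc 1 (n - 2)) {e : ℤ}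
    (he : |e| ≤ 1) : ((x + e).val : ℤ) = x.val + e := by
  rw [mem_Icc] at hx
  rw [abs_le] at he
  have hcast : x + e = ((x.val + e : ℤ) : ZMod n) := by simp
  rw [hcast, ZMod.val_intCast, Int.emod_eq_of_lt] <;> omega

lemma exists_mem_closedBox_ternaryWeight_eq [NeZero n] {v : Fin d → ZMod n}
    (hv : v ∈ interiorVertices d n) {t : ℤ} (ht : 2 * |t| < 3 ^ d) :
    ∃ u ∈ closedBox v, (ternaryWeight u : ℤ) = ternaryWeight v + t := by
  obtain ⟨ε, hε, hsum⟩ := exists_balancedTernary_digits ht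
  simp only [interiorVertices, Fintype.mem_piFinset, mem_filter, mem_univ, true_and] at hv
  have hval (i : Fin d) := val_add_intCast_of_mem_Icc (hv i) (hε i)
  refine ⟨fun i => v i + ε i, mem_closedBox.2 fun i => ?_, ?_⟩
  · have := abs_le.1 (hε i)
    obtain h | h | h : ε i = -1 ∨ ε i = 0 ∨ ε i = 1 := by omega
    all_goals simp [h]
  · simp only [ternaryWeight, Nat.cast_sum, Nat.cast_mul, Nat.cast_pow, Nat.cast_ofNat, hval,
      mul_add, sum_add_distrib, hsum]

def ternarySet (d n m : ℕ) [NeZero n] : Finset (Fin d → ZMod n) :=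
  {v ∈ interiorVertices d n | ¬ m ∣ ternaryWeight v}

lemma isKDependent_ternarySet [NeZero n] (hn : 3 ≤ n) {m : ℕ} (hm : 2 * m = 3 ^ d + 1) :
    IsKDependent (torusGraph d fun _ => n) (3 ^ d - 3)
      (ternarySet d n m : Set (Fin d → ZMod n)) := by
  rw [isKDependent_coe_iff]
  intro v hv
  obtain ⟨hint, hndvd⟩ := mem_filter.1 hv
  have h3 : (3 : ℤ) ^ d = 2 * m - 1 := by
    have := congrArg (Nat.cast : ℕ → ℤ) hm
    push_cast at this
    linarith
  have hm0 : (0 : ℤ) < m := by linarith [pow_pos (three_pos : (0 : ℤ) < 3) d]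
  set w : ℤ := ((ternaryWeight v : ℕ) : ℤ)
  set c := w % m
  have hc0 : c ≠ 0 := fun h => hndvd (Int.natCast_dvd_natCast.1 (Int.dvd_of_emod_eq_zero h))
  have hc : 0 ≤ c ∧ c < m := ⟨Int.emod_nonneg w hm0.ne', Int.emod_lt_of_pos w hm0⟩
  have hwc : w - c = m * (w / m) := by linarith [Int.mul_ediv_add_emod w m]
  -- `w - c` and `w - c + m` are the two multiples of `m` within distance `m - 1` of `w`.
  obtain ⟨u₁, hu₁, hw₁⟩ := exists_mem_closedBox_ternaryWeight_eq hint (t := -c)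
    (by rw [h3, abs_neg, abs_of_nonneg hc.1]; omega)
  obtain ⟨u₂, hu₂, hw₂⟩ := exists_mem_closedBox_ternaryWeight_eq hint (t := m - c)
    (by rw [h3, abs_of_nonneg (by omega)]; omega)
  have hne {x y : Fin d → ZMod n} (h : (ternaryWeight x : ℤ) ≠ ternaryWeight y) : x ≠ y :=
    fun e => h (e ▸ rfl)
  have hnotMem {u : Fin d → ZMod n} (h : (m : ℤ) ∣ ternaryWeight u) :
      u ∉ ternarySet d n m :=
    fun hu => (mem_filter.1 hu).2 (Int.natCast_dvd_natCast.1 h)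
  refine (SimpleGraph.card_filter_adj_le_degree_sub_two
    (adj_iff.2 ⟨hne (by omega), hu₁⟩) (adj_iff.2 ⟨hne (by omega), hu₂⟩) (hne (by omega))
    (hnotMem ⟨w / m, by omega⟩)
    (hnotMem ⟨w / m + 1, by rw [hw₂]; linear_combination hwc⟩)).trans ?_
  rw [isRegularOfDegree hn v]
  omega

lemma card_interiorVertices [NeZero n] : #(interiorVertices d n) = (n - 2) ^ d := by
  have hcoord : #{x : ZMod n | x.val ∈ Icc 1 (n - 2)} = n - 2 := by
    refine (card_nbij' (t := Icc 1 (n - 2)) ZMod.val Nat.cast (fun x hx => by simpa using hx)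
      (fun k hk => ?_) (fun x _ => ZMod.natCast_zmod_val x) (fun k hk => ?_)).trans (by simp)
    all_goals
      simp only [coe_Icc, Set.mem_Icc, coe_filter, mem_univ, true_and, Set.mem_ofPred_eq,
        mem_Icc] at hk ⊢
      rw [ZMod.val_cast_of_lt (by omega)]
    exact hk
  simp only [interiorVertices, Fintype.card_piFinset, hcoord, prod_const, card_univ,
    Fintype.card_fin]

lemma card_filter_dvd_val_add_le [NeZero n] {m : ℕ} (R : ℕ) :
    #{x : ZMod n | m ∣ x.val + R} ≤ n / m + 1 := by
  calc _ ≤ #(range (n / m + 1)) := card_le_card_of_injOn (fun x => x.val / m) ?_ ?_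
    _ = n / m + 1 := card_range _
  · intro x _
    simpa [Nat.lt_succ_iff] using Nat.div_le_div_right (ZMod.val_lt x).le
  · intro x hx y hy hxy
    simp only [coe_filter, mem_univ, true_and, Set.mem_ofPred_eq] at hx hy
    have hmod : x.val % m = y.val % m := Nat.ModEq.add_right_cancel' R
      ((Nat.modEq_zero_iff_dvd.2 hx).trans (Nat.modEq_zero_iff_dvd.2 hy).symm)
    apply ZMod.val_injective
    rw [← Nat.div_add_mod x.val m, ← Nat.div_add_mod y.val m, hmod]
    exact congrArg (m * · + _) hxy

lemma ternaryWeight_eq_val_zero_add (v : Fin (d + 1) → ZMod n) :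
    ternaryWeight v = (v 0).val + 3 * ternaryWeight (Fin.tail v) := by
  simp [ternaryWeight, Fin.sum_univ_succ, pow_succ', mul_sum, Fin.tail, mul_assoc]

lemma card_filter_dvd_ternaryWeight_le [NeZero n] {m : ℕ} :
    #{v : Fin (d + 1) → ZMod n | m ∣ ternaryWeight v} ≤ (n / m + 1) * n ^ d := by
  calc _ ≤ (n / m + 1) *
          #(({v | m ∣ ternaryWeight v} : Finset (Fin (d + 1) → ZMod n)).image Fin.tail) :=
        card_le_mul_card_image _ _ fun a _ => ?_
    _ ≤ (n / m + 1) * n ^ d := by gcongr; exact (card_le_univ _).trans (by simp)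
  -- On a fibre of `Fin.tail`, a vertex is determined by its first coordinate.
  refine (card_le_card_of_injOn (fun v => v 0)
    (t := {x : ZMod n | m ∣ x.val + 3 * ternaryWeight a})
    (fun v hv => ?_) (fun v hv w hw h => ?_)).trans (card_filter_dvd_val_add_le _)
  · simp only [coe_filter, mem_filter, mem_univ, true_and, Set.mem_ofPred_eq] at hv ⊢
    rw [← hv.2, ← ternaryWeight_eq_val_zero_add]
    exact hv.1
  · simp only [coe_filter, mem_filter, mem_univ, true_and, Set.mem_ofPred_eq] at hv hw
    rw [← Fin.cons_self_tail v, ← Fin.cons_self_tail w, hv.2, hw.2, show v 0 = w 0 from h]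

lemma le_card_ternarySet_add [NeZero n] (m : ℕ) :
    (n - 2) ^ (d + 1) ≤ #(ternarySet (d + 1) n m) + (n / m + 1) * n ^ d := by
  rw [ternarySet, filter_not, ← card_interiorVertices]
  have := le_card_sdiff {v ∈ interiorVertices (d + 1) n | m ∣ ternaryWeight v}
    (interiorVertices (d + 1) n)
  have := card_le_card
    (filter_subset_filter (m ∣ ternaryWeight ·) (subset_univ (interiorVertices (d + 1) n)))
  have := card_filter_dvd_ternaryWeight_le (d := d) (n := n) (m := m)
  omega

lemma le_betaK_add [NeZero n] (hn : 3 ≤ n) {m : ℕ} (hm : 2 * m = 3 ^ (d + 1) + 1) :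
    (n - 2) ^ (d + 1) ≤
      betaK (torusGraph (d + 1) fun _ => n) (3 ^ (d + 1) - 3) + (n / m + 1) * n ^ d := by
  have h := (isKDependent_ternarySet hn hm).ncard_le_betaK
  rw [Set.ncard_coe_finset] at h
  linarith [le_card_ternarySet_add (d := d) (n := n) m]

lemma betaK_div_le [NeZero n] (hd : 1 ≤ d) (hn : 3 ≤ n) :
    (betaK (torusGraph d fun _ => n) (3 ^ d - 3) : ℝ) / (n : ℝ) ^ d ≤
      ((3 : ℝ) ^ d - 1) / ((3 : ℝ) ^ d + 1) := by
  have h := (Nat.cast_le (α := ℝ)).2 (betaK_mul_le hd hn)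
  push_cast [Nat.cast_sub (Nat.one_le_pow d 3 three_pos)] at h
  rw [div_le_div_iff₀ (by positivity) (by positivity)]
  linarith

lemma le_betaK_div [NeZero n] (hn : 3 ≤ n) {m : ℕ} (hm : 2 * m = 3 ^ (d + 1) + 1) :
    (1 - 2 / (n : ℝ)) ^ (d + 1) - (1 / (m : ℝ) + 1 / (n : ℝ)) ≤
      (betaK (torusGraph (d + 1) fun _ => n) (3 ^ (d + 1) - 3) : ℝ) / (n : ℝ) ^ (d + 1) := by
  have h := (Nat.cast_le (α := ℝ)).2 (le_betaK_add hn hm)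
  push_cast [Nat.cast_sub (by omega : 2 ≤ n)] at h
  have hdiv : ((n / m : ℕ) : ℝ) ≤ n / m := Nat.cast_div_le
  have hn0 : (0 : ℝ) < n := by positivity
  have hm0 : (0 : ℝ) < m := by norm_cast; omega
  calc (1 - 2 / (n : ℝ)) ^ (d + 1) - (1 / (m : ℝ) + 1 / (n : ℝ))
      = ((n - 2 : ℝ) ^ (d + 1) - ((n : ℝ) / m + 1) * (n : ℝ) ^ d) / (n : ℝ) ^ (d + 1) := by
        rw [show 1 - 2 / (n : ℝ) = ((n : ℝ) - 2) / n by field_simp, div_pow]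
        field_simp
        ring
    _ ≤ _ := by
        gcongr
        nlinarith [pow_nonneg hn0.le d]

end torusGraph

lemma tendsto_one_sub_two_div_pow_sub (k m : ℕ) :
    Tendsto (fun n : ℕ => (1 - 2 / (n : ℝ)) ^ k - (1 / (m : ℝ) + 1 / (n : ℝ))) atTop
      (𝓝 (1 - 1 / (m : ℝ))) := by
  have hinv := tendsto_one_div_atTop_nhds_zero_nat (𝕜 := ℝ)
  have hlim := ((tendsto_const_nhds (x := (1 : ℝ))).sub (hinv.const_mul 2)).pow k |>.sub
    ((tendsto_const_nhds (x := 1 / (m : ℝ))).add hinv)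
  simpa [div_eq_mul_one_div (2 : ℝ)] using hlim

/-- τ_{3^d−3}^(d) = (3^d − 1)/(3^d + 1); in particular
τ_6^(2) = 4/5 and τ_24^(3) = 13/14. -/
theorem stmt_13 (d : ℕ) (hd : 1 ≤ d) :
    Filter.Tendsto
      (fun n : ℕ => (betaK (torusGraph d (fun _ => n)) (3 ^ d - 3) : ℝ) / (n : ℝ) ^ d)
      Filter.atTop
      (nhds (((3 : ℝ) ^ d - 1) / ((3 : ℝ) ^ d + 1))) := by
  obtain ⟨d, rfl⟩ : ∃ d', d = d' + 1 := ⟨d - 1, by omega⟩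
  obtain ⟨m, hm⟩ : ∃ m, 2 * m = 3 ^ (d + 1) + 1 := by
    obtain ⟨j, hj⟩ : Odd (3 ^ (d + 1)) := Odd.pow (by decide)
    exact ⟨j + 1, by omega⟩
  have hvalue : 1 - 1 / (m : ℝ) = ((3 : ℝ) ^ (d + 1) - 1) / ((3 : ℝ) ^ (d + 1) + 1) := by
    have hmR : (m : ℝ) = ((3 : ℝ) ^ (d + 1) + 1) / 2 := by
      rw [eq_div_iff two_ne_zero]; exact_mod_cast (mul_comm 2 m).symm.trans hm
    rw [hmR]
    field_simp
    ring
  refine tendsto_of_tendsto_of_tendsto_of_le_of_le'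
    (hvalue ▸ tendsto_one_sub_two_div_pow_sub (d + 1) m) tendsto_const_nhds ?_ ?_ <;>
    filter_upwards [eventually_ge_atTop 3] with n hn <;> have : NeZero n := ⟨by omega⟩
  · exact torusGraph.le_betaK_div hn hm
  · exact torusGraph.betaK_div_le (by omega) hn
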